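/- Let K be a field and M an A × B matrix over K, with Π a partition of the column set B into n classes. If for every subset Θ of Π the rank of the submatrix M[A, ⋃Θ] is at least k + |Θ| − n, then there exists a partial transversal P of Π with |P| = k such that the submatrix M[A, P] has rank k. -/

import Mathlib

/-!
Rado's deletion argument. Suppose the current column set `D` meets some class in two columns
`x ≠ y`. If deleting either of them broke the condition, there would be violating families
`Θ₁` (for `x`) and `Θ₂` (for `y`), both containing that class `c`. The columns of `D` over
`Θ₁ ∪ Θ₂` lie in the union of the two violating column sets, and those over `(Θ₁ ∩ Θ₂) \ {c}`
lie in their intersection, so submodularity of the rank contradicts the condition for these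
two families. Hence one column can always be deleted; once `D` is a partial transversal the
condition for all classes gives rank `D ≥ k`, and any `k` independent columns of `D` will do.
-/

open Module Submodule Set
open scoped Finset

section LinearRank

variable {K V B : Type*} [Field K] [AddCommGroup V] [Module K V] (v : B → V)

theorem Set.finrank_image_mono {S T : Set B} (hT : T.Finite) (hST : S ⊆ T) :
    (v '' S).finrank K ≤ (v '' T).finrank K := by
  have := Module.Finite.span_of_finite K (hT.image v)
  exact Submodule.finrank_mono (span_mono (image_mono hST))

theorem Set.finrank_image_union_add_finrank_image_inter_le {S T : Set B} (hS : S.Finite)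
    (hT : T.Finite) :
    (v '' (S ∪ T)).finrank K + (v '' (S ∩ T)).finrank K ≤
      (v '' S).finrank K + (v '' T).finrank K := by
  have := Module.Finite.span_of_finite K (hS.image v)
  have := Module.Finite.span_of_finite K (hT.image v)
  have hsup : span K (v '' (S ∪ T)) = span K (v '' S) ⊔ span K (v '' T) := by
    rw [image_union, span_union]
  have hinf : span K (v '' (S ∩ T)) ≤ span K (v '' S) ⊓ span K (v '' T) :=
    le_inf (span_mono (image_mono inter_subset_left)) (span_mono (image_mono inter_subset_right))
  have := Submodule.finrank_sup_add_finrank_inf_eq (span K (v '' S)) (span K (v '' T))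
  have := Submodule.finrank_mono hinf
  unfold Set.finrank
  rw [hsup]
  omega

theorem LinearIndepOn.finrank_image_eq_card {P : Finset B} (hP : LinearIndepOn K v (P : Set B)) :
    (v '' P).finrank K = #P := by
  rw [image_eq_range, ← linearIndependent_iff_card_eq_finrank_span.mp hP]
  simp

theorem exists_subset_card_eq_linearIndepOn {D : Finset B} {k : ℕ}
    (hk : k ≤ (v '' D).finrank K) : ∃ P ⊆ D, #P = k ∧ LinearIndepOn K v (P : Set B) := by
  obtain ⟨I, hID, -, hDI, hI⟩ :=
    exists_linearIndepOn_extension (linearIndepOn_empty K v) (empty_subset (D : Set B))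
  lift I to Finset B using (D.finite_toSet.subset hID)
  have hspan : span K (v '' D) = span K (v '' I) :=
    le_antisymm (span_le.2 hDI) (span_mono (image_mono hID))
  have hkI : k ≤ #I := by rwa [Set.finrank, hspan, ← Set.finrank, hI.finrank_image_eq_card] at hk
  obtain ⟨P, hPI, hPk⟩ := Finset.exists_subset_card_eq hkI
  exact ⟨P, hPI.trans (Finset.coe_subset.1 hID), hPk, hI.mono (Finset.coe_subset.2 hPI)⟩

end LinearRank

section Rado

variable {K V B ι : Type*} [Field K] [AddCommGroup V] [Module K V] [Fintype ι]

-- Rado's condition on the columns in `D`, with `n = card ι` moved to the right so that it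
-- can be stated in `ℕ`.
variable (K) in
def RadoCondition (v : B → V) (b : B → ι) (k : ℕ) (D : Finset B) : Prop :=
  ∀ Θ : Finset ι, k + #Θ ≤ (v '' (D ∩ b ⁻¹' Θ)).finrank K + Fintype.card ι

variable {v : B → V} {b : B → ι} {k : ℕ} {D : Finset B}

theorem RadoCondition.le_finrank (hD : RadoCondition K v b k D) : k ≤ (v '' D).finrank K := by
  have := hD Finset.univ
  rw [Finset.coe_univ, preimage_univ, inter_univ, Finset.card_univ] at this
  omega

theorem RadoCondition.exists_erase [DecidableEq B] [DecidableEq ι]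
    (hD : RadoCondition K v b k D) {x y : B} (hx : x ∈ D) (hy : y ∈ D) (hxy : x ≠ y)
    (hb : b x = b y) :
    ∃ z ∈ D, RadoCondition K v b k (D.erase z) := by
  by_contra! hfail
  obtain ⟨Θ₁, hΘ₁⟩ := not_forall.1 (hfail x hx)
  obtain ⟨Θ₂, hΘ₂⟩ := not_forall.1 (hfail y hy)
  rw [not_le, Finset.coe_erase] at hΘ₁ hΘ₂
  have mem_of_violated {z : B} {Θ : Finset ι}
      (h : (v '' ((↑D \ {z}) ∩ b ⁻¹' Θ)).finrank K + Fintype.card ι < k + #Θ) : b z ∈ Θ := by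
    by_contra hz
    rw [Set.sdiff_inter_right_comm, sdiff_singleton_eq_self fun h ↦ hz h.2] at h
    exact (hD Θ).not_gt h
  have hc₁ : b y ∈ Θ₁ := hb ▸ mem_of_violated hΘ₁
  have hc₂ : b y ∈ Θ₂ := mem_of_violated hΘ₂
  set S := (↑D \ {x}) ∩ b ⁻¹' Θ₁
  set T := (↑D \ {y}) ∩ b ⁻¹' Θ₂
  have hunion : ↑D ∩ b ⁻¹' ↑(Θ₁ ∪ Θ₂) ⊆ S ∪ T := by
    rintro j ⟨hjD, hjΘ⟩
    simp only [S, T, Finset.coe_union, mem_union, mem_inter_iff, mem_sdiff, mem_preimage,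
      mem_singleton_iff, Finset.mem_coe] at *
    grind
  have hinter : ↑D ∩ b ⁻¹' ↑((Θ₁ ∩ Θ₂).erase (b y)) ⊆ S ∩ T := by
    rintro j ⟨hjD, hjΘ⟩
    simp only [S, T, mem_inter_iff, mem_sdiff, mem_preimage, mem_singleton_iff,
      Finset.mem_coe, Finset.mem_erase, Finset.mem_inter] at *
    grind
  have hS : S.Finite := D.finite_toSet.subset fun j hj ↦ hj.1.1
  have hT : T.Finite := D.finite_toSet.subset fun j hj ↦ hj.1.1
  have := finrank_image_mono v (K := K) (hS.union hT) hunion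
  have := finrank_image_mono v (K := K) (hS.inter_of_left T) hinter
  have := finrank_image_union_add_finrank_image_inter_le v (K := K) hS hT
  have := hD (Θ₁ ∪ Θ₂)
  have := hD ((Θ₁ ∩ Θ₂).erase (b y))
  have := Finset.card_union_add_card_inter Θ₁ Θ₂
  have := Finset.card_erase_add_one (Finset.mem_inter.2 ⟨hc₁, hc₂⟩)
  omega

theorem RadoCondition.exists_injOn_linearIndepOn [DecidableEq B] [DecidableEq ι]
    (hD : RadoCondition K v b k D) :
    ∃ P ⊆ D, #P = k ∧ InjOn b P ∧ LinearIndepOn K v (P : Set B) := by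
  induction D using Finset.strongInduction with
  | H D ih =>
  by_cases hinj : InjOn b D
  · obtain ⟨P, hPD, hPk, hPv⟩ := exists_subset_card_eq_linearIndepOn v hD.le_finrank
    exact ⟨P, hPD, hPk, hinj.mono (Finset.coe_subset.2 hPD), hPv⟩
  · obtain ⟨x, hx, y, hy, hb, hxy⟩ : ∃ x ∈ D, ∃ y ∈ D, b x = b y ∧ x ≠ y := by
      simpa [InjOn] using hinj
    obtain ⟨z, hz, hDz⟩ := hD.exists_erase hx hy hxy hb
    obtain ⟨P, hPD, hP⟩ := ih _ (Finset.erase_ssubset hz) hDz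
    exact ⟨P, hPD.trans (D.erase_subset z), hP⟩

end Rado

theorem Matrix.rank_submatrix_subtype_val {m n R : Type*} [CommSemiring R] (M : Matrix m n R)
    (p : n → Prop) [Fintype (Subtype p)] :
    (M.submatrix id (Subtype.val : Subtype p → n)).rank = (M.col '' {j | p j}).finrank R := by
  rw [rank_eq_finrank_span_cols, Set.finrank, ← Subtype.range_coe_subtype, ← range_comp]
  rfl

theorem stmt_5_general {K : Type*} [Field K] {A B : Type*} [Fintype B] {n k : ℕ}
    (M : Matrix A B K) (b : B → Fin n)
    (h : ∀ Θ : Finset (Fin n),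
      (k : ℤ) + Θ.card - n ≤
        ((M.submatrix id (fun j : {j : B // b j ∈ Θ} => (j : B))).rank : ℤ)) :
    ∃ P : Finset B, P.card = k ∧ Set.InjOn b ↑P ∧
      (M.submatrix id (fun j : {j : B // j ∈ P} => (j : B))).rank = k := by
  have hRado : RadoCondition K M.col b k Finset.univ := by
    intro Θ
    have hΘ := h Θ
    rw [Matrix.rank_submatrix_subtype_val] at hΘ
    simp only [Finset.coe_univ, univ_inter, Fintype.card_fin, preimage, Finset.mem_coe]
    omega
  classical
  obtain ⟨P, -, hPk, hPb, hPv⟩ := hRado.exists_injOn_linearIndepOn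
  refine ⟨P, hPk, hPb, ?_⟩
  rw [Matrix.rank_submatrix_subtype_val, ← hPk]
  exact hPv.finrank_image_eq_card

/-- Rado–Perfect ("if" direction): if for every set Θ of classes the rank of the
columns in ⋃Θ is at least k + |Θ| - n, then there is a partial transversal P of
size k whose column-submatrix has rank k. Classes are given by b : B → Fin n. -/
theorem stmt_5 {K : Type*} [Field K] {A B : Type*} [Fintype A] [Fintype B]
    [DecidableEq B] {n k : ℕ} (M : Matrix A B K) (b : B → Fin n)
    (h : ∀ Θ : Finset (Fin n),
      (k : ℤ) + Θ.card - n ≤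
        ((M.submatrix id (fun j : {j : B // b j ∈ Θ} => (j : B))).rank : ℤ)) :
    ∃ P : Finset B, P.card = k ∧ Set.InjOn b ↑P ∧
      (M.submatrix id (fun j : {j : B // j ∈ P} => (j : B))).rank = k :=
  stmt_5_general M b h
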